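/- arXiv:1804.09008 — 2 statements merged into one kernel-verified Lean document; each statement's English description precedes it below -/
import Mathlib

section
/- Let G and H be topological groups and φ : H → G a continuous group homomorphism with dense image. Let O ≤ G be an open subgroup. If {h_i | i ∈ I} is a complete set of left coset representatives of φ⁻¹(O) in H, then {φ(h_i) | i ∈ I} is a complete set of left coset representatives of O in G. In particular, the index [G : O] equals [H : φ⁻¹(O)]. -/
theorem QuotientGroup.mk_apply_eq_mk_apply_iff {G H : Type*} [Group G] [Group H]
    (φ : H →* G) (O : Subgroup G) (x y : H) :
    (φ x : G ⧸ O) = φ y ↔ (x : H ⧸ O.comap φ) = y := by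
  simp only [QuotientGroup.eq, Subgroup.mem_comap, map_mul, map_inv]

/-- Every left coset of an open subgroup is open, hence meets a dense set. -/
theorem DenseRange.surjective_quotientMk_comp {G α : Type*} [Group G] [TopologicalSpace G]
    [ContinuousConstSMul G G] {f : α → G} (hf : DenseRange f) {O : Subgroup G}
    (hO : IsOpen (O : Set G)) : Function.Surjective fun a => (f a : G ⧸ O) := by
  intro q
  obtain ⟨g, rfl⟩ := QuotientGroup.mk_surjective q
  obtain ⟨a, ha⟩ := hf.exists_mem_open (hO.smul g) ⟨g, by simpa using mem_leftCoset g O.one_mem⟩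
  exact ⟨a, (QuotientGroup.eq.2 (mem_leftCoset_iff g |>.1 ha)).symm⟩

theorem QuotientGroup.bijective_mk_comp_of_surjective {G H I : Type*} [Group G] [Group H]
    (φ : H →* G) (O : Subgroup G) {h : I → H}
    (hrep : Function.Bijective fun i => (h i : H ⧸ O.comap φ))
    (hsurj : Function.Surjective fun x => (φ x : G ⧸ O)) :
    Function.Bijective fun i => (φ (h i) : G ⧸ O) := by
  refine ⟨fun i j hij => hrep.injective ((mk_apply_eq_mk_apply_iff φ O _ _).1 hij), fun q => ?_⟩
  obtain ⟨x, rfl⟩ := hsurj q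
  obtain ⟨i, hi⟩ := hrep.surjective x
  exact ⟨i, (mk_apply_eq_mk_apply_iff φ O _ _).2 hi⟩

theorem stmt_0_general {G H : Type*} [Group G] [TopologicalSpace G] [IsTopologicalGroup G]
    [Group H]
    (φ : H →* G) (hφdense : DenseRange φ)
    (O : Subgroup G) (hO : IsOpen (O : Set G))
    {I : Type*} (h : I → H)
    (hrep : Function.Bijective fun i => (QuotientGroup.mk (h i) : H ⧸ O.comap φ)) :
    (Function.Bijective fun i => (QuotientGroup.mk (φ (h i)) : G ⧸ O)) ∧
      O.index = (O.comap φ).index := by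
  have hbij := QuotientGroup.bijective_mk_comp_of_surjective φ O hrep
    (hφdense.surjective_quotientMk_comp hO)
  refine ⟨hbij, ?_⟩
  rw [Subgroup.index, Subgroup.index, ← Nat.card_congr (Equiv.ofBijective _ hbij),
    Nat.card_congr (Equiv.ofBijective _ hrep)]

/-- Coset representatives transfer along a continuous homomorphism with dense image,
and in particular the indices `[G : O]` and `[H : φ⁻¹(O)]` agree. -/
theorem stmt_0 {G H : Type*} [Group G] [TopologicalSpace G] [IsTopologicalGroup G]
    [Group H] [TopologicalSpace H] [IsTopologicalGroup H]
    (φ : H →* G) (hφcont : Continuous φ) (hφdense : DenseRange φ)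
    (O : Subgroup G) (hO : IsOpen (O : Set G))
    {I : Type*} (h : I → H)
    (hrep : Function.Bijective fun i => (QuotientGroup.mk (h i) : H ⧸ O.comap φ)) :
    (Function.Bijective fun i => (QuotientGroup.mk (φ (h i)) : G ⧸ O)) ∧
      O.index = (O.comap φ).index :=
  stmt_0_general φ hφdense O hO h hrep
end

section
/- Let H be a topological group, G a totally disconnected locally compact group, φ : H → G a continuous homomorphism with dense image, and U a compact open subgroup of G. Set K = φ⁻¹(U). If L ≤ K has finite index in K, then the closure of φ(L) in G is a compact open subgroup of G of finite index in U; moreover [cl(φ(L)) : V] = [L : φ⁻¹(V) ∩ L] for any open subgroup V ≤ cl(φ(L)). -/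
/-!
Density of `φ` and openness of `U` put `U` inside the closure of `φ(K)`. Finitely many closed
translates of `W = cl(φ(L))` cover `φ(K)`, hence its closure, so `W` has finite index in `U`;
being closed of finite index in the open subgroup `U`, it is open. For open `V`, every coset of
`V` in `W` is an open set meeting the dense subgroup `φ(L)`, so
`[W : V] = [φ(L) : V] = [L : φ⁻¹(V)]`.
-/

open Pointwise

namespace Subgroup

theorem relIndex_map_map_ne_zero {H G : Type*} [Group H] [Group G] (f : H →* G)
    {L K : Subgroup H} (h : L.relIndex K ≠ 0) : (L.map f).relIndex (K.map f) ≠ 0 := by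
  rw [← relIndex_comap]
  exact mt (relIndex_eq_zero_of_le_left (le_comap_map f L)) h

section Topological

variable {G : Type*} [Group G] [TopologicalSpace G] [IsTopologicalGroup G]

theorem isOpen_of_isClosed_of_relIndex_ne_zero {W U : Subgroup G} (hWU : W ≤ U)
    (hUo : IsOpen (U : Set G)) (hWc : IsClosed (W : Set G)) (hWU_fin : W.relIndex U ≠ 0) :
    IsOpen (W : Set G) := by
  have : (W.subgroupOf U).FiniteIndex := ⟨hWU_fin⟩
  have hopen : IsOpen ((W.subgroupOf U : Subgroup U) : Set U) :=
    isOpen_of_isClosed_of_finiteIndex _ (hWc.preimage continuous_subtype_val)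
  convert hUo.isOpenMap_subtype_val _ hopen using 1
  exact (Set.image_preimage_eq_of_subset fun x hx => ⟨⟨x, hWU hx⟩, rfl⟩).symm

theorem relIndex_topologicalClosure_ne_zero {D E : Subgroup G} (h : D.relIndex E ≠ 0) :
    D.topologicalClosure.relIndex E.topologicalClosure ≠ 0 := by
  have : Finite (E ⧸ D.subgroupOf E) := index_ne_zero_iff_finite.mp h
  let rep : E ⧸ D.subgroupOf E → G := fun q => q.out
  have hrep (q) : rep q ∈ E.topologicalClosure := E.le_topologicalClosure q.out.2
  -- finitely many closed translates of `closure D` cover `E`, hence also `closure E`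
  have hcover : (E.topologicalClosure : Set G) ⊆ ⋃ q, rep q • (D.topologicalClosure : Set G) := by
    refine closure_minimal (fun e he => Set.mem_iUnion.mpr ⟨(⟨e, he⟩ : E), ?_⟩)
      (isClosed_iUnion_of_finite fun q => D.isClosed_topologicalClosure.smul _)
    obtain ⟨d, hd⟩ := QuotientGroup.mk_out_eq_mul (D.subgroupOf E) ⟨e, he⟩
    rw [mem_leftCoset_iff]
    simp only [rep, hd, coe_mul, mul_inv_rev, inv_mul_cancel_right]
    exact D.le_topologicalClosure (D.inv_mem d.2)
  refine index_ne_zero_iff_finite.mpr (Finite.of_surjective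
    (fun q => (⟨rep q, hrep q⟩ : E.topologicalClosure)) fun x => ?_)
  obtain ⟨w, rfl⟩ := QuotientGroup.mk_surjective x
  obtain ⟨q, hq⟩ := Set.mem_iUnion.mp (hcover w.2)
  refine ⟨q, QuotientGroup.eq.mpr ?_⟩
  rw [mem_subgroupOf]
  exact mem_leftCoset_iff _ |>.mp hq

theorem relIndex_topologicalClosure_of_isOpen (D : Subgroup G) {V : Subgroup G}
    (hV : IsOpen (V : Set G)) : V.relIndex D.topologicalClosure = V.relIndex D := by
  let f := quotientSubgroupOfEmbeddingOfLE V D.le_topologicalClosure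
  have hf : Function.Surjective f := by
    intro x
    obtain ⟨w, rfl⟩ := QuotientGroup.mk_surjective x
    -- `w • V` is an open neighbourhood of `w ∈ closure D`, so it meets `D`
    obtain ⟨d, hdw, hd⟩ := mem_closure_iff.mp w.2 _ (hV.smul (w : G)) (Set.mem_smul_set.mpr
      ⟨1, V.one_mem, mul_one _⟩)
    refine ⟨QuotientGroup.mk ⟨d, hd⟩, QuotientGroup.eq.mpr ?_⟩
    rw [mem_subgroupOf]
    simpa using V.inv_mem ((mem_leftCoset_iff _).mp hdw)
  exact (Nat.card_congr (Equiv.ofBijective f ⟨f.injective, hf⟩)).symm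

theorem le_topologicalClosure_map_comap {H : Type*} [Group H] {φ : H →* G} (hφ : DenseRange φ)
    {U : Subgroup G} (hU : IsOpen (U : Set G)) : U ≤ ((U.comap φ).map φ).topologicalClosure := by
  intro u hu
  have := hφ.open_subset_closure_inter hU hu
  rwa [← SetLike.mem_coe, topologicalClosure_coe, map_comap_eq, coe_inf, MonoidHom.coe_range,
    Set.inter_comm]

end Topological

end Subgroup

open Subgroup in
theorem stmt_15_general {H G : Type*} [Group H]
    [Group G] [TopologicalSpace G] [IsTopologicalGroup G]
    (φ : H →* G) (hφdense : DenseRange φ)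
    (U : Subgroup G) (hUc : IsCompact (U : Set G)) (hUo : IsOpen (U : Set G))
    (L : Subgroup H) (hLK : L ≤ U.comap φ) (hLfin : L.relIndex (U.comap φ) ≠ 0) :
    IsCompact (((L.map φ).topologicalClosure : Subgroup G) : Set G) ∧
      IsOpen (((L.map φ).topologicalClosure : Subgroup G) : Set G) ∧
      (L.map φ).topologicalClosure.relIndex U ≠ 0 ∧
      ∀ V : Subgroup G, IsOpen (V : Set G) → V ≤ (L.map φ).topologicalClosure →
        V.relIndex (L.map φ).topologicalClosure = (V.comap φ ⊓ L).relIndex L := by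
  set W := (L.map φ).topologicalClosure
  have hWU : W ≤ U := topologicalClosure_minimal _ (map_le_iff_le_comap.mpr hLK)
    (U.isClosed_of_isOpen hUo)
  have hWU_fin : W.relIndex U ≠ 0 :=
    mt (relIndex_eq_zero_of_le_right (le_topologicalClosure_map_comap hφdense hUo))
      (relIndex_topologicalClosure_ne_zero (relIndex_map_map_ne_zero φ hLfin))
  refine ⟨hUc.of_isClosed_subset (isClosed_topologicalClosure _) hWU,
    isOpen_of_isClosed_of_relIndex_ne_zero hWU hUo (isClosed_topologicalClosure _) hWU_fin,
    hWU_fin, fun V hV _ => ?_⟩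
  rw [inf_relIndex_right, relIndex_comap, relIndex_topologicalClosure_of_isOpen _ hV]

/-- Let `φ : H → G` be a continuous homomorphism with dense image into a t.d.l.c. group,
`U ≤ G` compact open, `K = φ⁻¹(U)` and `L ≤ K` of finite index in `K`. Then the closure
of `φ(L)` is a compact open subgroup of finite index in `U`, and for every open subgroup
`V` of the closure of `φ(L)` one has `[cl(φ(L)) : V] = [L : φ⁻¹(V) ∩ L]`. -/
theorem stmt_15 {H G : Type*} [Group H] [TopologicalSpace H] [IsTopologicalGroup H]
    [Group G] [TopologicalSpace G] [IsTopologicalGroup G]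
    [LocallyCompactSpace G] [TotallyDisconnectedSpace G] [T2Space G]
    (φ : H →* G) (hφcont : Continuous φ) (hφdense : DenseRange φ)
    (U : Subgroup G) (hUc : IsCompact (U : Set G)) (hUo : IsOpen (U : Set G))
    (L : Subgroup H) (hLK : L ≤ U.comap φ) (hLfin : L.relIndex (U.comap φ) ≠ 0) :
    IsCompact (((L.map φ).topologicalClosure : Subgroup G) : Set G) ∧
      IsOpen (((L.map φ).topologicalClosure : Subgroup G) : Set G) ∧
      (L.map φ).topologicalClosure.relIndex U ≠ 0 ∧
      ∀ V : Subgroup G, IsOpen (V : Set G) → V ≤ (L.map φ).topologicalClosure →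
        V.relIndex (L.map φ).topologicalClosure = (V.comap φ ⊓ L).relIndex L :=
  stmt_15_general φ hφdense U hUc hUo L hLK hLfin
end
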